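/- Let X ⊆ ℝ^d be a nonempty closed convex set with metric projection P_X, and let f_1, …, f_n : ℝ^d → ℝ be differentiable, μ-strongly convex and L-smooth with 0 < μ ≤ L; set f = (1/n)Σ_l f_l and let x* be the unique minimizer of f over X. Let φ, φ', π ∈ ℝⁿ be positive stochastic vectors, let R be a row-stochastic n×n matrix with φ'ᵀR = φᵀ, let 0 < η < 1/(nL), λ ∈ (0, 1], and let x_1, …, x_n, y_1, …, y_n ∈ ℝ^d satisfy Σ_l y_l = Σ_l ∇f_l(x_l). Define z_i = (1 − λ)x_i + λ P_X(x_i − η y_i) and x⁺_i = Σ_j R_{ij} z_j, and assume the averaging contraction D(x⁺, φ') ≤ σ·D(z, φ) holds for some σ ∈ (0, 1). Then D(x⁺, φ') ≤ 2λσ·q_π(η, 1)·√(Σ_i φ_i ‖x_i − x*‖²) + (σ·q_π(η, λ) + 2ηλσL·√(n/min_i φ_i))·D(x, φ) + 2ηλσ·S(y, π), where q_π(η, λ) = max_i (1 − λ·η n π_i·μ). -/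

import Mathlib

open Finset RealInnerProductSpace

/-- Consensus error `D(u, a) = √(Σ_i Σ_j a_i a_j ‖u_i − u_j‖²)`. -/
noncomputable def Derr {n d : ℕ} (a : Fin n → ℝ) (u : Fin n → EuclideanSpace ℝ (Fin d)) : ℝ :=
  Real.sqrt (∑ i, ∑ j, a i * a j * ‖u i - u j‖ ^ 2)

/-- Gradient-tracking error `S(y, a) = √(Σ_i a_i ‖y_i/a_i − Σ_l y_l‖²)`. -/
noncomputable def Serr {n d : ℕ} (a : Fin n → ℝ) (y : Fin n → EuclideanSpace ℝ (Fin d)) : ℝ :=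
  Real.sqrt (∑ i, a i * ‖(a i)⁻¹ • y i - (∑ l, y l)‖ ^ 2)

/-- Minimum entry of a vector over `Fin n`, `n ≠ 0`. -/
noncomputable def fmin {n : ℕ} [NeZero n] (a : Fin n → ℝ) : ℝ :=
  Finset.univ.inf' Finset.univ_nonempty a

/-- `q_π(η, λ) = max_i (1 − λ·ηnπ_i·μ)`. -/
noncomputable def qmax {n : ℕ} [NeZero n] (π : Fin n → ℝ) (μ η lam : ℝ) : ℝ :=
  Finset.univ.sup' Finset.univ_nonempty (fun i => 1 - lam * (η * n * π i) * μ)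

/-!
Write `g = ∑ l, f l`, which is `nμ`-strongly convex and `nL`-smooth. By the variational
inequality, `x*` is the projection of `x* − η π_i ∇g(x*)`, so nonexpansiveness of `P_X` bounds
`‖P_X(x_i − η y_i) − x*‖` by the norm of a gradient step of `g` (which contracts by
`1 − η π_i n μ`, by strong cocoercivity of `∇g`), plus `η π_i L ∑_l ‖x_l − x_i‖` for the
disagreement of the local gradients and `η π_i ‖y_i/π_i − ∑_l y_l‖` for the tracking error.
Taking the `φ`-weighted ℓ² norm of these bounds and using
`D(z, φ) ≤ (1 − λ) D(x, φ) + 2λ ‖P_X(x − η y) − x*‖_φ`, the averaging contraction gives the claim.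
-/

theorem sub_le_half_mul_of_hasDerivAt_le {h h' : ℝ → ℝ} {c : ℝ}
    (hh : ∀ t, HasDerivAt h (h' t) t) (hh' : ∀ t ∈ Set.Icc (0 : ℝ) 1, h' t ≤ c * t) :
    h 1 - h 0 ≤ c / 2 := by
  have hanti : AntitoneOn (fun t => h t - c / 2 * t ^ 2) (Set.Icc 0 1) := by
    refine antitoneOn_of_hasDerivWithinAt_nonpos (f' := fun t => h' t - c / 2 * (2 * t))
      (convex_Icc 0 1) ?_ (fun t _ => ?_) ?_
    · exact (continuous_iff_continuousAt.2 fun t => (hh t).continuousAt).continuousOn.sub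
        (by fun_prop)
    · have := ((hh t).fun_sub ((hasDerivAt_pow 2 t).const_mul (c / 2))).hasDerivWithinAt
        (s := interior (Set.Icc 0 1))
      simpa using this
    · intro t ht
      rw [interior_Icc] at ht
      have := hh' t (Set.Ioo_subset_Icc_self ht)
      linarith
  have := hanti (by simp) (by simp) zero_le_one
  linarith

section GradientField

variable {E : Type*} [NormedAddCommGroup E] [InnerProductSpace ℝ E] [CompleteSpace E]

theorem hasGradientAt_fun_sum {ι : Type*} [Fintype ι] {f : ι → E → ℝ} {G : ι → E} {x : E}
    (hf : ∀ l, HasGradientAt (f l) (G l) x) :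
    HasGradientAt (fun v => ∑ l, f l v) (∑ l, G l) x := by
  rw [hasGradientAt_iff_hasFDerivAt, map_sum]
  exact HasFDerivAt.fun_sum fun l _ => (hf l).hasFDerivAt

theorem hasDerivAt_comp_add_smul {f : E → ℝ} {G : E → E}
    (hf : ∀ x, HasGradientAt f (G x) x) (a d : E) (t : ℝ) :
    HasDerivAt (fun s : ℝ => f (a + s • d)) ⟪G (a + t • d), d⟫ t := by
  have hline : HasDerivAt (fun s : ℝ => a + s • d) d t := by
    simpa using ((hasDerivAt_id t).smul_const d).const_add a
  simpa [Function.comp_def] using (hf (a + t • d)).hasFDerivAt.comp_hasDerivAt t hline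

theorem inner_nonneg_of_isMinOn {f : E → ℝ} {X : Set E} {a g : E} (hX : Convex ℝ X)
    (ha : a ∈ X) (hmin : IsMinOn f X a) (hf : HasGradientAt f g a) :
    ∀ u ∈ X, 0 ≤ ⟪g, u - a⟫ := by
  intro u hu
  have := hmin.localize.hasFDerivWithinAt_nonneg hf.hasFDerivAt.hasFDerivWithinAt
    (sub_mem_posTangentConeAt_of_segment_subset (hX.segment_subset ha hu))
  simpa using this

end GradientField

section SmoothStronglyConvex

variable {E : Type*} [NormedAddCommGroup E] [InnerProductSpace ℝ E]

theorem norm_sub_sq_le_mul_inner_of_bregman_bounds {h : E → ℝ} {G : E → E} {c : ℝ} (hc : 0 < c)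
    (hlow : ∀ x y, h x + ⟪G x, y - x⟫ ≤ h y)
    (hup : ∀ x y, h y ≤ h x + ⟪G x, y - x⟫ + c / 2 * ‖y - x‖ ^ 2) (x y : E) :
    ‖G y - G x‖ ^ 2 ≤ c * ⟪G y - G x, y - x⟫ := by
  -- compare `h` at `y - c⁻¹ (G y - G x)` from below (at `x`) and from above (at `y`)
  have half : ∀ x y : E, h x + ⟪G x, y - x⟫ + 1 / (2 * c) * ‖G y - G x‖ ^ 2 ≤ h y := by
    intro x y
    set D := G y - G x
    have h1 := hlow x (y - c⁻¹ • D)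
    have h2 := hup y (y - c⁻¹ • D)
    have e1 : ⟪G x, y - c⁻¹ • D - x⟫ = ⟪G x, y - x⟫ - c⁻¹ * ⟪G x, D⟫ := by
      rw [show y - c⁻¹ • D - x = (y - x) - c⁻¹ • D by abel, inner_sub_right,
        real_inner_smul_right]
    have e2 : ⟪G y, y - c⁻¹ • D - y⟫ = -(c⁻¹ * ⟪G y, D⟫) := by
      rw [show y - c⁻¹ • D - y = -(c⁻¹ • D) by abel, inner_neg_right, real_inner_smul_right]
    have e3 : ‖y - c⁻¹ • D - y‖ ^ 2 = c⁻¹ ^ 2 * ‖D‖ ^ 2 := by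
      rw [show y - c⁻¹ • D - y = -(c⁻¹ • D) by abel, norm_neg, norm_smul, mul_pow,
        Real.norm_eq_abs, sq_abs]
    have e4 : ⟪G y, D⟫ - ⟪G x, D⟫ = ‖D‖ ^ 2 := by
      rw [← inner_sub_left, real_inner_self_eq_norm_sq]
    rw [e1] at h1
    rw [e2, e3] at h2
    have e5 : c⁻¹ * ⟪G y, D⟫ - c⁻¹ * ⟪G x, D⟫ = c⁻¹ * ‖D‖ ^ 2 := by rw [← mul_sub, e4]
    have : c / 2 * (c⁻¹ ^ 2 * ‖D‖ ^ 2) = c⁻¹ * ‖D‖ ^ 2 - 1 / (2 * c) * ‖D‖ ^ 2 := by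
      field_simp; ring
    linarith
  have hxy := half x y
  have hyx := half y x
  rw [norm_sub_rev (G x)] at hyx
  have e : ⟪G x, y - x⟫ + ⟪G y, x - y⟫ = -⟪G y - G x, y - x⟫ := by
    rw [← neg_sub y x, inner_neg_right, inner_sub_left]; ring
  have key : 2 * (1 / (2 * c)) * ‖G y - G x‖ ^ 2 ≤ ⟪G y - G x, y - x⟫ := by linarith
  calc ‖G y - G x‖ ^ 2 = c * (2 * (1 / (2 * c)) * ‖G y - G x‖ ^ 2) := by field_simp
    _ ≤ c * ⟪G y - G x, y - x⟫ := by gcongr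

variable [CompleteSpace E] {f : E → ℝ} {G : E → E} {μ L : ℝ}

theorem hasDerivAt_comp_add_smul_sub_inner (hf : ∀ x, HasGradientAt f (G x) x) (a d : E)
    (t : ℝ) :
    HasDerivAt (fun s : ℝ => f (a + s • d) - s * ⟪G a, d⟫) ⟪G (a + t • d) - G a, d⟫ t := by
  simpa [inner_sub_left] using
    (hasDerivAt_comp_add_smul hf a d t).fun_sub ((hasDerivAt_id t).mul_const ⟪G a, d⟫)

theorem sub_sub_inner_le_of_lipschitz (hf : ∀ x, HasGradientAt f (G x) x)
    (hsmooth : ∀ u v, ‖G u - G v‖ ≤ L * ‖u - v‖) (a b : E) :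
    f b - f a - ⟪G a, b - a⟫ ≤ L / 2 * ‖b - a‖ ^ 2 := by
  have key := sub_le_half_mul_of_hasDerivAt_le (c := L * ‖b - a‖ ^ 2)
    (hasDerivAt_comp_add_smul_sub_inner hf a (b - a)) fun t ⟨ht0, _⟩ => calc
      ⟪G (a + t • (b - a)) - G a, b - a⟫ ≤ ‖G (a + t • (b - a)) - G a‖ * ‖b - a‖ :=
        real_inner_le_norm _ _
      _ ≤ L * ‖t • (b - a)‖ * ‖b - a‖ := by
        gcongr; simpa using hsmooth (a + t • (b - a)) a
      _ = L * ‖b - a‖ ^ 2 * t := by rw [norm_smul, Real.norm_of_nonneg ht0]; ring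
  simp only [one_smul, zero_smul, add_zero, add_sub_cancel, one_mul, zero_mul, sub_zero] at key
  linarith

theorem le_sub_sub_inner_of_strongMono (hf : ∀ x, HasGradientAt f (G x) x)
    (hstrong : ∀ u v, μ * ‖u - v‖ ^ 2 ≤ ⟪G u - G v, u - v⟫) (a b : E) :
    μ / 2 * ‖b - a‖ ^ 2 ≤ f b - f a - ⟪G a, b - a⟫ := by
  have key := sub_le_half_mul_of_hasDerivAt_le (c := -(μ * ‖b - a‖ ^ 2))
    (fun t => (hasDerivAt_comp_add_smul_sub_inner hf a (b - a) t).neg) fun t ⟨ht0, _⟩ => by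
      have hmono := hstrong (a + t • (b - a)) a
      rw [add_sub_cancel_left, norm_smul, real_inner_smul_right, Real.norm_of_nonneg ht0]
        at hmono
      rcases ht0.lt_or_eq with ht | rfl
      · nlinarith
      · simp
  simp only [Pi.neg_apply, one_smul, zero_smul, add_zero, add_sub_cancel, one_mul, zero_mul,
    sub_zero] at key
  linarith

theorem norm_sq_add_mul_le_inner_of_strongMono_of_lipschitz
    (hf : ∀ x, HasGradientAt f (G x) x)
    (hstrong : ∀ u v, μ * ‖u - v‖ ^ 2 ≤ ⟪G u - G v, u - v⟫)
    (hsmooth : ∀ u v, ‖G u - G v‖ ≤ L * ‖u - v‖) (hμ : 0 ≤ μ) (hμL : μ ≤ L) (a b : E) :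
    ‖G b - G a‖ ^ 2 + μ * L * ‖b - a‖ ^ 2 ≤ (L + μ) * ⟪G b - G a, b - a⟫ := by
  have hmono := hstrong b a
  have hlip := hsmooth b a
  rcases hμL.lt_or_eq with hlt | rfl
  · -- `f - μ/2 ‖·‖²` is convex and `(L - μ)`-smooth, so its gradient is cocoercive
    have hbreg : ∀ x y : E, (f y - μ / 2 * ‖y‖ ^ 2) - (f x - μ / 2 * ‖x‖ ^ 2)
        - ⟪G x - μ • x, y - x⟫ = (f y - f x - ⟪G x, y - x⟫) - μ / 2 * ‖y - x‖ ^ 2 := by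
      intro x y
      rw [show y = x + (y - x) by abel, norm_add_sq_real, inner_sub_left, real_inner_smul_left]
      simp only [add_sub_cancel_left]
      ring
    have hcoco := norm_sub_sq_le_mul_inner_of_bregman_bounds (h := fun v => f v - μ / 2 * ‖v‖ ^ 2)
      (G := fun v => G v - μ • v) (sub_pos.2 hlt)
      (fun x y => by
        linarith [hbreg x y, le_sub_sub_inner_of_strongMono hf hstrong x y])
      (fun x y => by
        linarith [hbreg x y, sub_sub_inner_le_of_lipschitz hf hsmooth x y]) a b
    have hdiff : G b - μ • b - (G a - μ • a) = (G b - G a) - μ • (b - a) := by module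
    have hnorm : ‖(G b - G a) - μ • (b - a)‖ ^ 2
        = ‖G b - G a‖ ^ 2 - 2 * μ * ⟪G b - G a, b - a⟫ + μ ^ 2 * ‖b - a‖ ^ 2 := by
      rw [norm_sub_sq_real, real_inner_smul_right, norm_smul, Real.norm_of_nonneg hμ]; ring
    have hinner : ⟪(G b - G a) - μ • (b - a), b - a⟫ = ⟪G b - G a, b - a⟫ - μ * ‖b - a‖ ^ 2 := by
      rw [inner_sub_left, real_inner_smul_left, real_inner_self_eq_norm_sq]
    rw [hdiff, hnorm, hinner] at hcoco
    nlinarith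
  · nlinarith [pow_le_pow_left₀ (norm_nonneg _) hlip 2]

theorem norm_sub_smul_sub_le_of_strongMono_of_lipschitz
    (hf : ∀ x, HasGradientAt f (G x) x)
    (hstrong : ∀ u v, μ * ‖u - v‖ ^ 2 ≤ ⟪G u - G v, u - v⟫)
    (hsmooth : ∀ u v, ‖G u - G v‖ ≤ L * ‖u - v‖) (hμ : 0 ≤ μ) (hμL : μ ≤ L) {α : ℝ} (hα : 0 ≤ α)
    (hαL : α * (L + μ) ≤ 2) (a b : E) :
    ‖(b - a) - α • (G b - G a)‖ ≤ (1 - α * μ) * ‖b - a‖ := by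
  have hcoco := norm_sq_add_mul_le_inner_of_strongMono_of_lipschitz hf hstrong hsmooth hμ hμL a b
  have hmono := hstrong b a
  have hrate : 0 ≤ 1 - α * μ := by nlinarith
  refine pow_le_pow_iff_left₀ (norm_nonneg _) (by positivity) two_ne_zero |>.1 ?_
  rw [norm_sub_sq_real, norm_smul, real_inner_smul_right, real_inner_comm, Real.norm_of_nonneg hα]
  nlinarith [mul_nonneg (mul_nonneg hα (sub_nonneg.2 hαL)) (sub_nonneg.2 hmono),
    mul_le_mul_of_nonneg_left hcoco (sq_nonneg α)]

end SmoothStronglyConvex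

section Projection

variable {E : Type*} [NormedAddCommGroup E] [InnerProductSpace ℝ E] {X : Set E}

theorem inner_sub_le_zero_of_forall_norm_sub_le (hX : Convex ℝ X) {v p : E} (hp : p ∈ X)
    (hmin : ∀ u ∈ X, ‖v - p‖ ≤ ‖v - u‖) : ∀ u ∈ X, ⟪v - p, u - p⟫ ≤ 0 := by
  have : Nonempty X := ⟨⟨p, hp⟩⟩
  refine (norm_eq_iInf_iff_real_inner_le_zero hX hp).1 (le_antisymm ?_ ?_)
  · exact le_ciInf fun u => hmin u u.2
  · exact ciInf_le (f := fun u : X => ‖v - u‖) ⟨0, by rintro _ ⟨u, rfl⟩; exact norm_nonneg _⟩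
      ⟨p, hp⟩

theorem norm_sub_le_of_inner_sub_le_zero {a b p q : E} (hp : p ∈ X) (hq : q ∈ X)
    (hpa : ∀ u ∈ X, ⟪a - p, u - p⟫ ≤ 0) (hqb : ∀ u ∈ X, ⟪b - q, u - q⟫ ≤ 0) :
    ‖p - q‖ ≤ ‖a - b‖ := by
  have hsq : ‖p - q‖ ^ 2 ≤ ⟪a - b, p - q⟫ := by
    have h1 := hpa q hq
    have h2 := hqb p hp
    rw [← neg_sub p q, inner_neg_right] at h1
    rw [show a - b = (a - p) - (b - q) + (p - q) by abel, inner_add_left, inner_sub_left,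
      real_inner_self_eq_norm_sq]
    linarith
  rcases (norm_nonneg (p - q)).eq_or_lt with h | h
  · rw [← h]; exact norm_nonneg _
  · nlinarith [real_inner_le_norm (a - b) (p - q)]

end Projection

section GradientSums

variable {E : Type*} [NormedAddCommGroup E] {ι : Type*} [Fintype ι] {G : ι → E → E}

theorem norm_sum_sub_sum_le_of_lipschitz {L : ℝ}
    (hsmooth : ∀ l u v, ‖G l u - G l v‖ ≤ L * ‖u - v‖) (u v : ι → E) :
    ‖∑ l, G l (u l) - ∑ l, G l (v l)‖ ≤ L * ∑ l, ‖u l - v l‖ := by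
  rw [← Finset.sum_sub_distrib, Finset.mul_sum]
  exact (norm_sum_le _ _).trans (Finset.sum_le_sum fun l _ => hsmooth l _ _)

variable [InnerProductSpace ℝ E]

theorem card_mul_le_inner_sum_sub_sum_of_strongMono {μ : ℝ}
    (hstrong : ∀ l u v, μ * ‖u - v‖ ^ 2 ≤ ⟪G l u - G l v, u - v⟫) (u v : E) :
    Fintype.card ι * μ * ‖u - v‖ ^ 2 ≤ ⟪∑ l, G l u - ∑ l, G l v, u - v⟫ := by
  rw [← Finset.sum_sub_distrib, sum_inner, mul_assoc, ← nsmul_eq_mul, ← Finset.card_univ,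
    ← Finset.sum_const]
  exact Finset.sum_le_sum fun l _ => hstrong l u v

theorem norm_tracking_step_le {L η p ρ : ℝ} (hsmooth : ∀ l u v, ‖G l u - G l v‖ ≤ L * ‖u - v‖)
    (x y : ι → E) (htrack : ∑ l, y l = ∑ l, G l (x l)) (xs : E) (i : ι) (hη : 0 ≤ η)
    (hp : 0 < p)
    (hstep : ‖(x i - xs) - (η * p) • (∑ l, G l (x i) - ∑ l, G l xs)‖ ≤ ρ * ‖x i - xs‖) :
    ‖x i - η • y i - (xs - (η * p) • ∑ l, G l xs)‖
      ≤ ρ * ‖x i - xs‖ + η * L * (p * ∑ l, ‖x l - x i‖) + η * (p * ‖p⁻¹ • y i - ∑ l, y l‖) := by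
  have hηp : 0 ≤ η * p := mul_nonneg hη hp.le
  set e := p⁻¹ • y i - ∑ l, y l
  have hy : y i = p • e + p • ∑ l, G l (x l) := by
    rw [smul_sub, smul_inv_smul₀ hp.ne', htrack]; abel
  have hsplit : x i - η • y i - (xs - (η * p) • ∑ l, G l xs)
      = ((x i - xs) - (η * p) • (∑ l, G l (x i) - ∑ l, G l xs))
        - (η * p) • (∑ l, G l (x l) - ∑ l, G l (x i)) - (η * p) • e := by
    rw [hy]; module
  rw [hsplit]
  refine (norm_sub_le _ _).trans (add_le_add ((norm_sub_le _ _).trans (add_le_add hstep ?_)) ?_)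
  · rw [norm_smul, Real.norm_of_nonneg hηp]
    calc η * p * ‖∑ l, G l (x l) - ∑ l, G l (x i)‖ ≤ η * p * (L * ∑ l, ‖x l - x i‖) :=
          mul_le_mul_of_nonneg_left (norm_sum_sub_sum_le_of_lipschitz hsmooth x _) hηp
      _ = η * L * (p * ∑ l, ‖x l - x i‖) := by ring
  · rw [norm_smul, Real.norm_of_nonneg hηp, mul_assoc]

end GradientSums

section ProjectedStep

variable {E : Type*} [NormedAddCommGroup E] [InnerProductSpace ℝ E] [CompleteSpace E]
  {ι : Type*} [Fintype ι]

theorem norm_proj_tracking_step_sub_le {X : Set E} (hX : Convex ℝ X) {P : E → E}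
    (hPmem : ∀ v, P v ∈ X) (hPproj : ∀ v, ∀ u ∈ X, ‖v - P v‖ ≤ ‖v - u‖)
    {f : ι → E → ℝ} {G : ι → E → E} (hf : ∀ l x, HasGradientAt (f l) (G l x) x) {μ L : ℝ}
    (hstrong : ∀ l u v, μ * ‖u - v‖ ^ 2 ≤ ⟪G l u - G l v, u - v⟫)
    (hsmooth : ∀ l u v, ‖G l u - G l v‖ ≤ L * ‖u - v‖) (hμ : 0 ≤ μ) (hμL : μ ≤ L)
    {xs : E} (hxs : xs ∈ X) (hmin : IsMinOn (fun v => ∑ l, f l v) X xs)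
    (x y : ι → E) (htrack : ∑ l, y l = ∑ l, G l (x l)) (i : ι) {η p : ℝ} (hη : 0 ≤ η)
    (hηL : η * (Fintype.card ι * L) < 1) (hp : 0 < p) (hp1 : p ≤ 1) :
    ‖P (x i - η • y i) - xs‖ ≤ (1 - η * p * (Fintype.card ι * μ)) * ‖x i - xs‖
      + η * L * (p * ∑ l, ‖x l - x i‖) + η * (p * ‖p⁻¹ • y i - ∑ l, y l‖) := by
  have hηp : 0 ≤ η * p := mul_nonneg hη hp.le
  have hstep : η * p * (Fintype.card ι * L + Fintype.card ι * μ) ≤ 2 := by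
    have hμL' : Fintype.card ι * μ ≤ Fintype.card ι * L := by gcongr
    have : p * (Fintype.card ι * L + Fintype.card ι * μ) ≤ 1 * (2 * (Fintype.card ι * L)) :=
      mul_le_mul hp1 (by linarith) (by have := hμ.trans hμL; positivity) zero_le_one
    nlinarith [mul_le_mul_of_nonneg_left this hη]
  have hsum : ∀ v, HasGradientAt (fun u => ∑ l, f l u) (∑ l, G l v) v := fun v =>
    hasGradientAt_fun_sum fun l => hf l v
  have hVI := inner_nonneg_of_isMinOn hX hxs hmin (hsum xs)
  -- `xs` is the projection of `xs - η p ∇g(xs)`, where `g = ∑ l, f l`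
  have hfixed : ∀ u ∈ X, ⟪xs - (η * p) • ∑ l, G l xs - xs, u - xs⟫ ≤ 0 := fun u hu => by
    rw [sub_sub_cancel_left, inner_neg_left, real_inner_smul_left]
    exact neg_nonpos.2 (mul_nonneg hηp (hVI u hu))
  refine (norm_sub_le_of_inner_sub_le_zero (hPmem _) hxs
    (inner_sub_le_zero_of_forall_norm_sub_le hX (hPmem _) (hPproj _)) hfixed).trans ?_
  refine norm_tracking_step_le hsmooth x y htrack xs i hη hp ?_
  refine norm_sub_smul_sub_le_of_strongMono_of_lipschitz (G := fun v => ∑ l, G l v) hsum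
    (card_mul_le_inner_sum_sub_sum_of_strongMono hstrong) (fun u v => ?_) (by positivity)
    (by gcongr) hηp hstep xs (x i)
  simpa [mul_assoc, mul_left_comm] using
    norm_sum_sub_sum_le_of_lipschitz hsmooth (fun _ => u) (fun _ => v)

end ProjectedStep

section WeightedL2

variable {ι : Type*} [Fintype ι]

noncomputable def weightedL2 (c r : ι → ℝ) : ℝ := √(∑ i, c i * r i ^ 2)

variable {c : ι → ℝ}

theorem weightedL2_add_le (hc : ∀ i, 0 ≤ c i) (r s : ι → ℝ) :
    weightedL2 c (fun i => r i + s i) ≤ weightedL2 c r + weightedL2 c s := by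
  let embed : (ι → ℝ) → EuclideanSpace ℝ ι := fun r => WithLp.toLp 2 fun i => √(c i) * r i
  have hembed : ∀ r, ‖embed r‖ = weightedL2 c r := fun r => by
    simp only [embed, EuclideanSpace.norm_eq, weightedL2, Real.norm_eq_abs, sq_abs, mul_pow,
      Real.sq_sqrt (hc _)]
  have hadd : embed (fun i => r i + s i) = embed r + embed s := by
    ext i; simp [embed, mul_add]
  rw [← hembed, ← hembed, ← hembed, hadd]
  exact norm_add_le _ _

theorem weightedL2_mono (hc : ∀ i, 0 ≤ c i) {r s : ι → ℝ} (hr : ∀ i, 0 ≤ r i)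
    (hrs : ∀ i, r i ≤ s i) : weightedL2 c r ≤ weightedL2 c s :=
  Real.sqrt_le_sqrt <| Finset.sum_le_sum fun i _ =>
    mul_le_mul_of_nonneg_left (pow_le_pow_left₀ (hr i) (hrs i) 2) (hc i)

theorem weightedL2_const_mul {K : ℝ} (hK : 0 ≤ K) (r : ι → ℝ) :
    weightedL2 c (fun i => K * r i) = K * weightedL2 c r := by
  simp only [weightedL2, mul_pow, mul_left_comm (c _), ← Finset.mul_sum]
  rw [Real.sqrt_mul (sq_nonneg K), Real.sqrt_sq hK]

theorem weightedL2_prod_fst (hc : ∑ i, c i = 1) (r : ι → ℝ) :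
    weightedL2 (fun p : ι × ι => c p.1 * c p.2) (fun p => r p.1) = weightedL2 c r := by
  simp only [weightedL2, Fintype.sum_prod_type, mul_right_comm (c _) (c _), ← Finset.mul_sum,
    hc, mul_one]

theorem weightedL2_prod_snd (hc : ∑ i, c i = 1) (r : ι → ℝ) :
    weightedL2 (fun p : ι × ι => c p.1 * c p.2) (fun p => r p.2) = weightedL2 c r := by
  simp only [weightedL2, Fintype.sum_prod_type, mul_assoc, ← Finset.mul_sum, ← Finset.sum_mul,
    hc, one_mul]

end WeightedL2

section ConsensusError

variable {n d : ℕ}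

theorem Derr_eq_weightedL2 (a : Fin n → ℝ) (u : Fin n → EuclideanSpace ℝ (Fin d)) :
    Derr a u = weightedL2 (fun p : Fin n × Fin n => a p.1 * a p.2) fun p => ‖u p.1 - u p.2‖ := by
  rw [Derr, weightedL2, Fintype.sum_prod_type]

theorem Derr_add_le {a : Fin n → ℝ} (ha : ∀ i, 0 ≤ a i) (u v : Fin n → EuclideanSpace ℝ (Fin d)) :
    Derr a (u + v) ≤ Derr a u + Derr a v := by
  simp only [Derr_eq_weightedL2]
  have hpair : ∀ p : Fin n × Fin n, 0 ≤ a p.1 * a p.2 := fun p => mul_nonneg (ha p.1) (ha p.2)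
  refine (weightedL2_mono hpair (fun _ => norm_nonneg _) fun p => ?_).trans
    (weightedL2_add_le hpair _ _)
  simpa [add_sub_add_comm] using norm_add_le (u p.1 - u p.2) (v p.1 - v p.2)

theorem Derr_smul (a : Fin n → ℝ) {c : ℝ} (hc : 0 ≤ c) (u : Fin n → EuclideanSpace ℝ (Fin d)) :
    Derr a (c • u) = c * Derr a u := by
  simp only [Derr_eq_weightedL2, Pi.smul_apply, ← smul_sub, norm_smul, Real.norm_of_nonneg hc,
    weightedL2_const_mul hc]

theorem Derr_le_two_mul_weightedL2 {a : Fin n → ℝ} (ha : ∀ i, 0 ≤ a i) (hsum : ∑ i, a i = 1)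
    (u : Fin n → EuclideanSpace ℝ (Fin d)) (c : EuclideanSpace ℝ (Fin d)) :
    Derr a u ≤ 2 * weightedL2 a fun i => ‖u i - c‖ := by
  have hpair : ∀ p : Fin n × Fin n, 0 ≤ a p.1 * a p.2 := fun p => mul_nonneg (ha p.1) (ha p.2)
  rw [Derr_eq_weightedL2, two_mul]
  calc _ ≤ weightedL2 (fun p : Fin n × Fin n => a p.1 * a p.2)
          (fun p => ‖u p.1 - c‖ + ‖u p.2 - c‖) :=
        weightedL2_mono hpair (fun _ => norm_nonneg _) fun p => norm_sub_le_norm_sub_add_norm_sub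
          (u p.1) c (u p.2) |>.trans_eq (by rw [norm_sub_rev c])
    _ ≤ _ := weightedL2_add_le hpair _ _
    _ = _ := by
      rw [weightedL2_prod_fst hsum fun i => ‖u i - c‖, weightedL2_prod_snd hsum fun i => ‖u i - c‖]

theorem Derr_convex_comb_le {a : Fin n → ℝ} (ha : ∀ i, 0 ≤ a i) (hsum : ∑ i, a i = 1)
    {lam : ℝ} (hlam0 : 0 ≤ lam) (hlam1 : lam ≤ 1) (u v : Fin n → EuclideanSpace ℝ (Fin d))
    (c : EuclideanSpace ℝ (Fin d)) :
    Derr a ((1 - lam) • u + lam • v)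
      ≤ (1 - lam) * Derr a u + lam * (2 * weightedL2 a fun i => ‖v i - c‖) := by
  refine (Derr_add_le ha _ _).trans ?_
  rw [Derr_smul a (sub_nonneg.2 hlam1), Derr_smul a hlam0]
  gcongr
  exact Derr_le_two_mul_weightedL2 ha hsum v c

theorem weightedL2_mul_norm_le_Serr {φ π : Fin n → ℝ} (hφ1 : ∀ i, φ i ≤ 1)
    (hπ0 : ∀ i, 0 ≤ π i) (hπ1 : ∀ i, π i ≤ 1) (y : Fin n → EuclideanSpace ℝ (Fin d)) :
    weightedL2 φ (fun i => π i * ‖(π i)⁻¹ • y i - ∑ l, y l‖) ≤ Serr π y := by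
  refine Real.sqrt_le_sqrt (Finset.sum_le_sum fun i _ => ?_)
  have : φ i * π i ≤ 1 := mul_le_one₀ (hφ1 i) (hπ0 i) (hπ1 i)
  calc φ i * (π i * ‖(π i)⁻¹ • y i - ∑ l, y l‖) ^ 2
      = φ i * π i * (π i * ‖(π i)⁻¹ • y i - ∑ l, y l‖ ^ 2) := by ring
    _ ≤ 1 * (π i * ‖(π i)⁻¹ • y i - ∑ l, y l‖ ^ 2) := by have := hπ0 i; gcongr
    _ = _ := one_mul _

variable [NeZero n]

theorem fmin_le (a : Fin n → ℝ) (i : Fin n) : fmin a ≤ a i :=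
  Finset.inf'_le _ (Finset.mem_univ i)

theorem fmin_pos {a : Fin n → ℝ} (ha : ∀ i, 0 < a i) : 0 < fmin a :=
  (Finset.lt_inf'_iff _).2 fun i _ => ha i

theorem le_qmax (π : Fin n → ℝ) (μ η lam : ℝ) (i : Fin n) :
    1 - lam * (η * n * π i) * μ ≤ qmax π μ η lam :=
  Finset.le_sup' (fun j => 1 - lam * (η * n * π j) * μ) (Finset.mem_univ i)

theorem weightedL2_mul_sum_norm_sub_le {φ π : Fin n → ℝ} (hφ : ∀ i, 0 < φ i)
    (hπ0 : ∀ i, 0 ≤ π i) (hπ1 : ∀ i, π i ≤ 1) (x : Fin n → EuclideanSpace ℝ (Fin d)) :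
    weightedL2 φ (fun i => π i * ∑ l, ‖x l - x i‖) ≤ √(n / fmin φ) * Derr φ x := by
  have hmin := fmin_pos hφ
  rw [Derr, ← Real.sqrt_mul (by positivity), Finset.mul_sum]
  refine Real.sqrt_le_sqrt (Finset.sum_le_sum fun i _ => ?_)
  have hcs : (∑ l, ‖x l - x i‖) ^ 2 ≤ n * ∑ l, ‖x l - x i‖ ^ 2 := by
    simpa using sq_sum_le_card_mul_sum_sq (s := Finset.univ) (f := fun l => ‖x l - x i‖)
  have hπsq : π i ^ 2 ≤ 1 := pow_le_one₀ (hπ0 i) (hπ1 i)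
  calc φ i * (π i * ∑ l, ‖x l - x i‖) ^ 2 ≤ φ i * (1 * (n * ∑ l, ‖x l - x i‖ ^ 2)) := by
        rw [mul_pow]; gcongr; exact (hφ i).le
    _ = ∑ l, n / fmin φ * (φ i * fmin φ * ‖x i - x l‖ ^ 2) := by
        simp only [Finset.mul_sum, norm_sub_rev (x i)]
        refine Finset.sum_congr rfl fun l _ => ?_
        field_simp
    _ ≤ n / fmin φ * ∑ j, φ i * φ j * ‖x i - x j‖ ^ 2 := by
        rw [Finset.mul_sum]; gcongr with l; exacts [(hφ i).le, fmin_le φ l]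

theorem weightedL2_le_of_le_step_bound {φ π : Fin n → ℝ} (hφ : ∀ i, 0 < φ i) (hφ1 : ∀ i, φ i ≤ 1)
    (hπ0 : ∀ i, 0 ≤ π i) (hπ1 : ∀ i, π i ≤ 1) {μ η L : ℝ} (hη : 0 ≤ η) (hL : 0 ≤ L)
    (hrate : ∀ i, 0 ≤ 1 - η * π i * (n * μ)) (x y : Fin n → EuclideanSpace ℝ (Fin d))
    (xs : EuclideanSpace ℝ (Fin d)) {r : Fin n → ℝ} (hr0 : ∀ i, 0 ≤ r i)
    (hr : ∀ i, r i ≤ (1 - η * π i * (n * μ)) * ‖x i - xs‖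
      + η * L * (π i * ∑ l, ‖x l - x i‖) + η * (π i * ‖(π i)⁻¹ • y i - ∑ l, y l‖)) :
    weightedL2 φ r ≤ qmax π μ η 1 * weightedL2 φ (fun i => ‖x i - xs‖)
      + η * L * √(n / fmin φ) * Derr φ x + η * Serr π y := by
  have hφ0 : ∀ i, 0 ≤ φ i := fun i => (hφ i).le
  have hq : ∀ i, 1 - η * π i * (n * μ) ≤ qmax π μ η 1 := fun i =>
    (le_qmax π μ η 1 i).trans_eq' (by ring)
  refine (weightedL2_mono hφ0 hr0 hr).trans <| (weightedL2_add_le hφ0 _ _).trans <|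
    (add_le_add_left (weightedL2_add_le hφ0 _ _) _).trans ?_
  rw [weightedL2_const_mul (mul_nonneg hη hL), weightedL2_const_mul hη, mul_assoc (η * L),
    ← weightedL2_const_mul ((hrate 0).trans (hq 0))]
  gcongr
  · exact weightedL2_mono hφ0 (fun i => mul_nonneg (hrate i) (norm_nonneg _)) fun i =>
      mul_le_mul_of_nonneg_right (hq i) (norm_nonneg _)
  · exact weightedL2_mul_sum_norm_sub_le hφ hπ0 hπ1 x
  · exact weightedL2_mul_norm_le_Serr hφ1 hπ0 hπ1 y

end ConsensusError

theorem consensus_error_bound_general {n d : ℕ} [NeZero n]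
    (X : Set (EuclideanSpace ℝ (Fin d)))
    (hXconvex : Convex ℝ X)
    (P : EuclideanSpace ℝ (Fin d) → EuclideanSpace ℝ (Fin d))
    (hPmem : ∀ v, P v ∈ X)
    (hPproj : ∀ v, ∀ u ∈ X, ‖v - P v‖ ≤ ‖v - u‖)
    (f : Fin n → EuclideanSpace ℝ (Fin d) → ℝ)
    (hfdiff : ∀ i, Differentiable ℝ (f i))
    (μ L : ℝ) (hμ : 0 < μ) (hμL : μ ≤ L)
    (hstrong : ∀ i u v, μ * ‖u - v‖ ^ 2 ≤ ⟪gradient (f i) u - gradient (f i) v, u - v⟫)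
    (hsmooth : ∀ i u v, ‖gradient (f i) u - gradient (f i) v‖ ≤ L * ‖u - v‖)
    (F : EuclideanSpace ℝ (Fin d) → ℝ)
    (hF : F = fun v => (1 / (n : ℝ)) * ∑ l, f l v)
    (xs : EuclideanSpace ℝ (Fin d)) (hxsmem : xs ∈ X)
    (hxsmin : ∀ u ∈ X, F xs ≤ F u)
    (φ φ' π : Fin n → ℝ)
    (hφpos : ∀ i, 0 < φ i) (hφsum : ∑ i, φ i = 1)
    (hπpos : ∀ i, 0 < π i) (hπsum : ∑ i, π i = 1)
    (η lam : ℝ) (hη0 : 0 < η) (hη : η < 1 / (n * L)) (hlam0 : 0 < lam) (hlam1 : lam ≤ 1)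
    (x y : Fin n → EuclideanSpace ℝ (Fin d))
    (htrack : ∑ l, y l = ∑ l, gradient (f l) (x l))
    (z xplus : Fin n → EuclideanSpace ℝ (Fin d))
    (hz : ∀ i, z i = (1 - lam) • x i + lam • P (x i - η • y i))
    (σ : ℝ) (hσ0 : 0 < σ)
    (hcontr : Derr φ' xplus ≤ σ * Derr φ z) :
    Derr φ' xplus
      ≤ 2 * lam * σ * qmax π μ η 1 * Real.sqrt (∑ i, φ i * ‖x i - xs‖ ^ 2)
        + (σ * qmax π μ η lam + 2 * η * lam * σ * L * Real.sqrt ((n : ℝ) / fmin φ)) * Derr φ x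
        + 2 * η * lam * σ * Serr π y := by
  have hn : (0 : ℝ) < n := Nat.cast_pos.2 (NeZero.pos n)
  have hL : 0 < L := hμ.trans_le hμL
  have hηnL : η * (n * L) < 1 := (lt_div_iff₀ (mul_pos hn hL)).1 (one_div (n * L : ℝ) ▸ hη)
  have hle_one : ∀ a : Fin n → ℝ, (∀ i, 0 < a i) → ∑ i, a i = 1 → ∀ i, a i ≤ 1 :=
    fun a ha hsum i => hsum ▸ Finset.single_le_sum (fun j _ => (ha j).le) (Finset.mem_univ i)
  have hrate : ∀ i, 0 ≤ 1 - η * π i * (n * μ) := fun i => by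
    have : π i * (n * μ) ≤ n * L :=
      (mul_le_of_le_one_left (mul_pos hn hμ).le (hle_one π hπpos hπsum i)).trans (by gcongr)
    nlinarith [mul_le_mul_of_nonneg_left this hη0.le]
  have hmin : IsMinOn (fun v => ∑ l, f l v) X xs := fun u hu =>
    le_of_mul_le_mul_left (by simpa only [hF] using hxsmin u hu) (by positivity)
  have hper := fun i => norm_proj_tracking_step_sub_le hXconvex hPmem hPproj
    (fun l v => (hfdiff l v).hasGradientAt) hstrong hsmooth hμ.le hμL hxsmem hmin x y htrack i
    hη0.le (by simpa using hηnL) (hπpos i) (hle_one π hπpos hπsum i)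
  have hz' : z = (1 - lam) • x + lam • fun i => P (x i - η • y i) := funext fun i => by
    simp [hz i]
  have hW := weightedL2_le_of_le_step_bound hφpos (hle_one φ hφpos hφsum) (fun i => (hπpos i).le)
    (hle_one π hπpos hπsum) hη0.le hL.le hrate x y xs (fun _ => norm_nonneg _)
    (by simpa only [Fintype.card_fin] using hper)
  have hqlam : 1 - lam ≤ qmax π μ η lam :=
    le_trans (by nlinarith [hrate 0, hπpos 0]) (le_qmax π μ η lam 0)
  calc Derr φ' xplus ≤ σ * Derr φ z := hcontr
    _ ≤ σ * (qmax π μ η lam * Derr φ x + lam * (2 * (qmax π μ η 1 *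
          weightedL2 φ (fun i => ‖x i - xs‖) + η * L * √(n / fmin φ) * Derr φ x
          + η * Serr π y))) := by
      rw [hz']
      gcongr
      refine (Derr_convex_comb_le (fun i => (hφpos i).le) hφsum hlam0.le hlam1 x _ xs).trans ?_
      gcongr
      exact Real.sqrt_nonneg _
    _ = _ := by rw [weightedL2]; ring

/-- Consensus error bound, Lemma `consensus-error`. One step of the
Projected Push-Pull update with averaging contraction `D(x⁺, φ') ≤ σ·D(z, φ)` gives
`D(x⁺, φ') ≤ 2λσ·q_π(η,1)·‖x − x*‖_φ + (σq_π(η,λ) + 2ηλσL√(n/min φ))·D(x, φ)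
+ 2ηλσ·S(y, π)`. -/
theorem consensus_error_bound {n d : ℕ} [NeZero n]
    (X : Set (EuclideanSpace ℝ (Fin d))) (hXne : X.Nonempty)
    (hXclosed : IsClosed X) (hXconvex : Convex ℝ X)
    (P : EuclideanSpace ℝ (Fin d) → EuclideanSpace ℝ (Fin d))
    (hPmem : ∀ v, P v ∈ X)
    (hPproj : ∀ v, ∀ u ∈ X, ‖v - P v‖ ≤ ‖v - u‖)
    (f : Fin n → EuclideanSpace ℝ (Fin d) → ℝ)
    (hfdiff : ∀ i, Differentiable ℝ (f i))
    (μ L : ℝ) (hμ : 0 < μ) (hμL : μ ≤ L)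
    (hstrong : ∀ i u v, μ * ‖u - v‖ ^ 2 ≤ ⟪gradient (f i) u - gradient (f i) v, u - v⟫)
    (hsmooth : ∀ i u v, ‖gradient (f i) u - gradient (f i) v‖ ≤ L * ‖u - v‖)
    (F : EuclideanSpace ℝ (Fin d) → ℝ)
    (hF : F = fun v => (1 / (n : ℝ)) * ∑ l, f l v)
    (xs : EuclideanSpace ℝ (Fin d)) (hxsmem : xs ∈ X)
    (hxsmin : ∀ u ∈ X, F xs ≤ F u)
    (hxsuniq : ∀ u ∈ X, (∀ v ∈ X, F u ≤ F v) → u = xs)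
    (φ φ' π : Fin n → ℝ)
    (hφpos : ∀ i, 0 < φ i) (hφsum : ∑ i, φ i = 1)
    (hφ'pos : ∀ i, 0 < φ' i) (hφ'sum : ∑ i, φ' i = 1)
    (hπpos : ∀ i, 0 < π i) (hπsum : ∑ i, π i = 1)
    (R : Fin n → Fin n → ℝ)
    (hRnonneg : ∀ i j, 0 ≤ R i j) (hRrow : ∀ i, ∑ j, R i j = 1)
    (hφR : ∀ j, ∑ i, φ' i * R i j = φ j)
    (η lam : ℝ) (hη0 : 0 < η) (hη : η < 1 / (n * L)) (hlam0 : 0 < lam) (hlam1 : lam ≤ 1)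
    (x y : Fin n → EuclideanSpace ℝ (Fin d))
    (htrack : ∑ l, y l = ∑ l, gradient (f l) (x l))
    (z xplus : Fin n → EuclideanSpace ℝ (Fin d))
    (hz : ∀ i, z i = (1 - lam) • x i + lam • P (x i - η • y i))
    (hxplus : ∀ i, xplus i = ∑ j, R i j • z j)
    (σ : ℝ) (hσ0 : 0 < σ) (hσ1 : σ < 1)
    (hcontr : Derr φ' xplus ≤ σ * Derr φ z) :
    Derr φ' xplus
      ≤ 2 * lam * σ * qmax π μ η 1 * Real.sqrt (∑ i, φ i * ‖x i - xs‖ ^ 2)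
        + (σ * qmax π μ η lam + 2 * η * lam * σ * L * Real.sqrt ((n : ℝ) / fmin φ)) * Derr φ x
        + 2 * η * lam * σ * Serr π y :=
  consensus_error_bound_general X hXconvex P hPmem hPproj f hfdiff μ L hμ hμL hstrong hsmooth F hF
    xs hxsmem hxsmin φ φ' π hφpos hφsum hπpos hπsum η lam hη0 hη hlam0 hlam1 x y htrack z xplus hz σ
    hσ0 hcontr
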